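/- Let (X,μ) be a σ-finite measure space with an A_∞-branching system for an infinite 0-1 matrix A. Define operators π(S_i) on L²(X,μ) by π(S_i)φ = χ_{R_i}·Φ_{f_i⁻¹}^{1/2}·(φ∘F). Then for every pair of finite subsets U, V ⊆ ℕ such that A(U,V,j) := ∏_{u∈U}A(u,j)·∏_{v∈V}(1−A(v,j)) vanishes for all but finitely many j, one has ∏_{u∈U} π(S_u)*π(S_u) · ∏_{v∈V} (Id − π(S_v)*π(S_v)) = Σ_{j : A(U,V,j)=1} π(S_j)π(S_j)*. -/

import Mathlib

open MeasureTheory Set ENNReal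

/-- An A_∞-branching system on a measure space (X, μ), for an infinite 0-1 matrix A
(definition 2.1 of the paper). -/
structure BranchingSystem {X : Type*} [MeasurableSpace X] (μ : MeasureTheory.Measure X)
    (A : ℕ → ℕ → ℕ) where
  f : ℕ → X → X
  F : X → X
  D : ℕ → Set X
  R : ℕ → Set X
  Φ : ℕ → X → ℝ≥0∞
  Φinv : ℕ → X → ℝ≥0∞
  measD : ∀ i, MeasurableSet (D i)
  measR : ∀ i, MeasurableSet (R i)
  measf : ∀ i, Measurable (f i)
  measF : Measurable F
  -- (1) f_i : D_i → R_i with f_i(D_i) = R_i μ-a.e.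
  mapsTo : ∀ i, Set.MapsTo (f i) (D i) (R i)
  image_ae : ∀ i, μ (f i '' D i \ R i) = 0 ∧ μ (R i \ f i '' D i) = 0
  -- (2) F ∘ f_i = id_{D_i} μ-a.e., F nonsingular
  left_inv : ∀ i, ∀ᵐ x ∂μ.restrict (D i), F (f i x) = x
  nonsingular : ∀ N : Set X, μ N = 0 → μ (F ⁻¹' N) = 0
  -- (3) μ(R_i ∩ R_j) = 0 for i ≠ j
  disjoint : ∀ i j, i ≠ j → μ (R i ∩ R j) = 0
  -- (4)
  cond4 : ∀ i j, (A i j = 0 → μ (R j ∩ D i) = 0) ∧ (A i j = 1 → μ (R j \ D i) = 0)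
  -- (5)
  cond5 : ∀ U V : Finset ℕ,
    ({j | (∀ u ∈ U, A u j = 1) ∧ ∀ v ∈ V, A v j = 0} : Set ℕ).Finite →
    μ (((⋂ u ∈ U, D u) ∩ ⋂ v ∈ V, (D v)ᶜ) \
        ⋃ j ∈ {j | (∀ u ∈ U, A u j = 1) ∧ ∀ v ∈ V, A v j = 0}, R j) = 0 ∧
    μ ((⋃ j ∈ {j | (∀ u ∈ U, A u j = 1) ∧ ∀ v ∈ V, A v j = 0}, R j) \
        ((⋂ u ∈ U, D u) ∩ ⋂ v ∈ V, (D v)ᶜ)) = 0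
  -- (6) Radon–Nikodym derivatives of μ∘f_i on D_i and μ∘f_i⁻¹ on R_i, extended by 0
  measΦ : ∀ i, Measurable (Φ i)
  measΦinv : ∀ i, Measurable (Φinv i)
  Φ_zero : ∀ i, ∀ x ∉ D i, Φ i x = 0
  Φinv_zero : ∀ i, ∀ x ∉ R i, Φinv i x = 0
  rn : ∀ i, ∀ E : Set X, MeasurableSet E → E ⊆ D i → μ (f i '' E) = ∫⁻ x in E, Φ i x ∂μ
  rninv : ∀ i, ∀ E : Set X, MeasurableSet E → E ⊆ R i →
    μ (f i ⁻¹' E ∩ D i) = ∫⁻ x in E, Φinv i x ∂μ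

section Aux
variable {X : Type*} [MeasurableSpace X] {μ : Measure X} {A : ℕ → ℕ → ℕ}


-- helper: lintegral over E of function vanishing off s
lemma setLIntegral_eq_inter {g : X → ℝ≥0∞} {s : Set X} (hs : MeasurableSet s)
    (h0 : ∀ x ∉ s, g x = 0) (E : Set X) :
    ∫⁻ x in E, g x ∂μ = ∫⁻ x in E ∩ s, g x ∂μ := by
  have hg : g = s.indicator g := by
    funext x
    by_cases hx : x ∈ s
    · rw [Set.indicator_of_mem hx]
    · rw [Set.indicator_of_notMem hx, h0 x hx]
  conv_lhs => rw [hg]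
  rw [lintegral_indicator hs, Measure.restrict_restrict hs, Set.inter_comm]

lemma measure_eq_of_diff_subset_null {s t b : Set X} (hb : μ b = 0) (h1 : s \ t ⊆ b)
    (h2 : t \ s ⊆ b) : μ s = μ t :=
  measure_congr (MeasureTheory.ae_eq_set.mpr ⟨measure_mono_null h1 hb, measure_mono_null h2 hb⟩)

lemma indicator_congr_ae_set {s t : Set X} (hst : ∀ᵐ x ∂μ, x ∈ s ↔ x ∈ t) (g : X → ℂ) :
    s.indicator g =ᵐ[μ] t.indicator g := by
  filter_upwards [hst] with x hx
  by_cases h : x ∈ s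
  · rw [Set.indicator_of_mem h, Set.indicator_of_mem (hx.mp h)]
  · rw [Set.indicator_of_notMem h, Set.indicator_of_notMem fun c => h (hx.mpr c)]

lemma indicator_congr_restrict {s : Set X} (hs : MeasurableSet s) {g h : X → ℂ}
    (hgh : ∀ᵐ x ∂μ.restrict s, g x = h x) : s.indicator g =ᵐ[μ] s.indicator h := by
  filter_upwards [ae_imp_of_ae_restrict hgh] with x hx
  by_cases hxs : x ∈ s
  · rw [Set.indicator_of_mem hxs, Set.indicator_of_mem hxs, hx hxs]
  · rw [Set.indicator_of_notMem hxs, Set.indicator_of_notMem hxs]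

end Aux

namespace BranchingSystem
variable {X : Type*} [MeasurableSpace X] {μ : Measure X} {A : ℕ → ℕ → ℕ}
variable (B : BranchingSystem μ A)

lemma comp_F_ae {β : Type*} {g h : X → β} (hgh : g =ᵐ[μ] h) :
    (fun x => g (B.F x)) =ᵐ[μ] fun x => h (B.F x) := by
  have h0 : μ {x | ¬ g x = h x} = 0 := ae_iff.mp hgh
  refine ae_iff.mpr (measure_mono_null (fun x hx => ?_) (B.nonsingular _ h0))
  exact hx

lemma mapA (i : ℕ) : Measure.map (B.f i) (μ.restrict (B.D i)) = μ.withDensity (B.Φinv i) := by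
  ext E hE
  rw [Measure.map_apply (B.measf i) hE, Measure.restrict_apply' (B.measD i),
    withDensity_apply _ hE,
    setLIntegral_eq_inter (B.measR i) (fun x hx => B.Φinv_zero i x hx) E,
    ← B.rninv i (E ∩ B.R i) (hE.inter (B.measR i)) Set.inter_subset_right]
  congr 1
  ext x
  constructor
  · rintro ⟨hx, hxD⟩; exact ⟨⟨hx, B.mapsTo i hxD⟩, hxD⟩
  · rintro ⟨⟨hx, _⟩, hxD⟩; exact ⟨hx, hxD⟩

lemma f_nonsingular (i : ℕ) {Z : Set X} (hZ : μ Z = 0) : μ (B.f i ⁻¹' Z ∩ B.D i) = 0 := by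
  have h1 : μ (B.f i ⁻¹' (toMeasurable μ Z) ∩ B.D i) = 0 := by
    rw [← Measure.restrict_apply' (B.measD i),
      ← Measure.map_apply (B.measf i) (measurableSet_toMeasurable μ Z), B.mapA i,
      withDensity_apply _ (measurableSet_toMeasurable μ Z)]
    exact setLIntegral_measure_zero _ _ (by rwa [measure_toMeasurable])
  exact measure_mono_null
    (Set.inter_subset_inter_left _ (Set.preimage_mono (subset_toMeasurable μ Z))) h1

lemma ae_finite_Φinv [SigmaFinite μ] (i : ℕ) : ∀ᵐ x ∂μ, B.Φinv i x ≠ ∞ := by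
  rw [ae_iff]
  simp only [not_not]
  set S := {x | B.Φinv i x = ∞} with hS
  have key : ∀ n, μ (S ∩ B.F ⁻¹' (spanningSets μ n)) = 0 := by
    intro n
    set W := spanningSets μ n with hW
    have hWm : MeasurableSet W := measurableSet_spanningSets μ n
    have h1 : μ.withDensity (B.Φinv i) (B.F ⁻¹' W) < ∞ := by
      rw [← B.mapA i, Measure.map_apply (B.measf i) (B.measF hWm),
        Measure.restrict_apply' (B.measD i)]
      have h2 : μ ((fun x => B.F (B.f i x)) ⁻¹' W ∩ B.D i) = μ (W ∩ B.D i) := by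
        rw [← Measure.restrict_apply' (B.measD i), ← Measure.restrict_apply' (B.measD i)]
        refine measure_congr (Filter.eventuallyEq_set.mpr ?_)
        filter_upwards [B.left_inv i] with x hx
        simp [Set.mem_preimage, hx]
      calc μ (B.f i ⁻¹' (B.F ⁻¹' W) ∩ B.D i) = μ (W ∩ B.D i) := h2
        _ ≤ μ W := measure_mono Set.inter_subset_left
        _ < ∞ := measure_spanningSets_lt_top μ n
    have h3 : μ.withDensity (B.Φinv i) (S ∩ B.F ⁻¹' W) = ∞ * μ (S ∩ B.F ⁻¹' W) := by
      have hSm : MeasurableSet S := B.measΦinv i (measurableSet_singleton ∞)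
      rw [withDensity_apply _ (hSm.inter (B.measF hWm))]
      rw [setLIntegral_congr_fun_ae (hSm.inter (B.measF hWm))
        (Filter.Eventually.of_forall (fun x hx => hx.1 : ∀ x ∈ S ∩ B.F ⁻¹' W, B.Φinv i x = ∞))]
      simp [setLIntegral_const]
    by_contra hne
    have : μ.withDensity (B.Φinv i) (S ∩ B.F ⁻¹' W) = ∞ := by
      rw [h3, ENNReal.top_mul hne]
    exact absurd (lt_of_le_of_lt (this ▸ measure_mono Set.inter_subset_right) h1) (lt_irrefl _)
  have hcover : S ⊆ ⋃ n, S ∩ B.F ⁻¹' (spanningSets μ n) := by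
    intro x hx
    have : B.F x ∈ ⋃ n, spanningSets μ n := by rw [iUnion_spanningSets]; trivial
    obtain ⟨n, hn⟩ := Set.mem_iUnion.mp this
    exact Set.mem_iUnion.mpr ⟨n, hx, hn⟩
  exact measure_mono_null hcover (measure_iUnion_null key)

lemma mapF (i : ℕ) : Measure.map B.F (μ.withDensity (B.Φinv i)) = μ.restrict (B.D i) := by
  rw [← B.mapA i, Measure.map_map B.measF (B.measf i)]
  have h : Measure.map (B.F ∘ B.f i) (μ.restrict (B.D i))
      = Measure.map id (μ.restrict (B.D i)) :=
    Measure.map_congr (by filter_upwards [B.left_inv i] with x hx; exact hx)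
  rw [h, Measure.map_id]

lemma exists_nullE (i : ℕ) : ∃ E : Set X, MeasurableSet E ∧ E ⊆ B.D i ∧ μ E = 0 ∧
    μ (B.f i '' E) = 0 ∧ ∀ x ∈ B.D i, x ∉ E → B.F (B.f i x) = x := by
  classical
  set N := {x | ¬ B.F (B.f i x) = x} ∩ B.D i with hN
  have hNnull : μ N = 0 := by
    have h := ae_iff.mp (B.left_inv i)
    rwa [Measure.restrict_apply' (B.measD i)] at h
  refine ⟨toMeasurable μ N ∩ B.D i, (measurableSet_toMeasurable μ N).inter (B.measD i),
    Set.inter_subset_right, ?_, ?_, ?_⟩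
  · exact measure_mono_null Set.inter_subset_left (by rwa [measure_toMeasurable])
  · rw [B.rn i _ ((measurableSet_toMeasurable μ N).inter (B.measD i)) Set.inter_subset_right]
    exact setLIntegral_measure_zero _ _
      (measure_mono_null Set.inter_subset_left (by rwa [measure_toMeasurable]))
  · intro x hxD hxE
    by_contra hc
    exact hxE ⟨subset_toMeasurable μ N ⟨hc, hxD⟩, hxD⟩

lemma badNull (i : ℕ) :
    μ ({x | ¬ (B.F x ∈ B.D i ∧ B.f i (B.F x) = x)} ∩ B.R i) = 0 := by
  obtain ⟨E, hEm, hED, hE0, hEim, hEgood⟩ := B.exists_nullE i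
  refine measure_mono_null (fun x => ?_) (measure_union_null (B.image_ae i).2 hEim)
  rintro ⟨hx, hxR⟩
  by_cases hxim : x ∈ B.f i '' B.D i
  · obtain ⟨y, hyD, rfl⟩ := hxim
    by_cases hyE : y ∈ E
    · exact Or.inr (Set.mem_image_of_mem _ hyE)
    · have hg := hEgood y hyD hyE
      exact absurd ⟨by rw [hg]; exact hyD, by rw [hg]⟩ hx
  · exact Or.inl ⟨hxR, hxim⟩

lemma aeR (i : ℕ) :
    ∀ᵐ x ∂μ.restrict (B.R i), B.F x ∈ B.D i ∧ B.f i (B.F x) = x := by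
  rw [ae_iff, Measure.restrict_apply' (B.measR i)]
  exact B.badNull i

lemma mapFR (i : ℕ) : Measure.map B.F (μ.restrict (B.R i)) = μ.withDensity (B.Φ i) := by
  obtain ⟨E, hEm, hED, hE0, hEim, hEgood⟩ := B.exists_nullE i
  ext W hW
  rw [Measure.map_apply B.measF hW, Measure.restrict_apply' (B.measR i),
    withDensity_apply _ hW,
    setLIntegral_eq_inter (B.measD i) (fun x hx => B.Φ_zero i x hx) W,
    ← B.rn i (W ∩ B.D i) (hW.inter (B.measD i)) Set.inter_subset_right]
  refine measure_eq_of_diff_subset_null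
    (b := ({x | ¬ (B.F x ∈ B.D i ∧ B.f i (B.F x) = x)} ∩ B.R i) ∪ B.f i '' E)
    (measure_union_null (B.badNull i) hEim) ?_ ?_
  · rintro x ⟨⟨hxW, hxR⟩, hxim⟩
    left
    refine ⟨fun hgood => hxim ?_, hxR⟩
    exact ⟨B.F x, ⟨hxW, hgood.1⟩, hgood.2⟩
  · rintro x ⟨⟨y, ⟨hyW, hyD⟩, rfl⟩, hx⟩
    by_cases hyE : y ∈ E
    · exact Or.inr (Set.mem_image_of_mem _ hyE)
    · left
      have hg := hEgood y hyD hyE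
      refine ⟨fun hgood => hx ?_, B.mapsTo i hyD⟩
      exact ⟨by show B.F (B.f i y) ∈ W; rw [hg]; exact hyW, B.mapsTo i hyD⟩

lemma lemE [SigmaFinite μ] (i : ℕ) :
    ∀ᵐ x ∂μ.restrict (B.R i), B.Φinv i x * B.Φ i (B.F x) = 1 := by
  have hmeas : Measurable fun x => B.Φinv i x * B.Φ i (B.F x) :=
    (B.measΦinv i).mul ((B.measΦ i).comp B.measF)
  have key : ∀ s : Set X, MeasurableSet s → (μ.restrict (B.R i)) s < ∞ →
      ∫⁻ x in s, B.Φinv i x * B.Φ i (B.F x) ∂(μ.restrict (B.R i))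
        = ∫⁻ x in s, (1 : ℝ≥0∞) ∂(μ.restrict (B.R i)) := by
    intro s hs _
    rw [Measure.restrict_restrict hs, setLIntegral_one]
    set E := s ∩ B.R i with hEdef
    have hE : MeasurableSet E := hs.inter (B.measR i)
    have hER : E ⊆ B.R i := Set.inter_subset_right
    set H : X → ℝ≥0∞ := fun y => E.indicator (fun z => B.Φ i (B.F z)) y with hHdef
    have hHmeas : Measurable H := Measurable.indicator ((B.measΦ i).comp B.measF) hE
    have step1 : ∫⁻ x in E, B.Φinv i x * B.Φ i (B.F x) ∂μ
        = ∫⁻ x, B.Φinv i x * H x ∂μ := by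
      rw [← lintegral_indicator hE]
      refine lintegral_congr fun x => ?_
      by_cases hx : x ∈ E
      · rw [Set.indicator_of_mem hx, hHdef]; simp [Set.indicator_of_mem hx]
      · rw [Set.indicator_of_notMem hx, hHdef]; simp [Set.indicator_of_notMem hx]
    have step2 : ∫⁻ x, B.Φinv i x * H x ∂μ = ∫⁻ x, H x ∂(μ.withDensity (B.Φinv i)) := by
      rw [lintegral_withDensity_eq_lintegral_mul μ (B.measΦinv i) hHmeas]; rfl
    have step3 : ∫⁻ x, H x ∂(μ.withDensity (B.Φinv i))
        = ∫⁻ x in B.D i, H (B.f i x) ∂μ := by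
      rw [← B.mapA i, lintegral_map hHmeas (B.measf i)]
    have step4 : ∫⁻ x in B.D i, H (B.f i x) ∂μ
        = ∫⁻ x in B.D i, (B.f i ⁻¹' E).indicator (B.Φ i) x ∂μ := by
      refine lintegral_congr_ae ?_
      filter_upwards [B.left_inv i] with x hx
      by_cases hfx : B.f i x ∈ E
      · rw [hHdef]
        simp only [Set.indicator_of_mem hfx, Set.indicator_of_mem (Set.mem_preimage.mpr hfx)]
        rw [hx]
      · rw [hHdef]
        simp [Set.indicator_of_notMem hfx,
          Set.indicator_of_notMem (fun c => hfx (Set.mem_preimage.mp c))]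
    have step5 : ∫⁻ x in B.D i, (B.f i ⁻¹' E).indicator (B.Φ i) x ∂μ
        = μ.withDensity (B.Φ i) (B.f i ⁻¹' E ∩ B.D i) := by
      rw [lintegral_indicator ((B.measf i) hE), Measure.restrict_restrict ((B.measf i) hE),
        withDensity_apply _ (((B.measf i) hE).inter (B.measD i))]
    have step6 : μ.withDensity (B.Φ i) (B.f i ⁻¹' E ∩ B.D i) = μ E := by
      rw [← B.mapFR i, Measure.map_apply B.measF (((B.measf i) hE).inter (B.measD i)),
        Measure.restrict_apply' (B.measR i)]
      refine measure_eq_of_diff_subset_null (b := {x | ¬ (B.F x ∈ B.D i ∧ B.f i (B.F x) = x)} ∩ B.R i)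
        (B.badNull i) ?_ ?_
      · rintro x ⟨⟨hx1, hx2⟩, hxE⟩
        exact ⟨fun hgood => hxE (by rw [← hgood.2]; exact hx1.1), hx2⟩
      · rintro x ⟨hxE, hxnot⟩
        refine ⟨fun hgood => hxnot ⟨⟨?_, hgood.1⟩, hER hxE⟩, hER hxE⟩
        rw [Set.mem_preimage, hgood.2]; exact hxE
    rw [step1, step2, step3, step4, step5, step6]
  have := ae_eq_of_forall_setLIntegral_eq_of_sigmaFinite
    (μ := μ.restrict (B.R i)) hmeas measurable_const key
  filter_upwards [this] with x hx
  simpa using hx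

end BranchingSystem

section Op

variable {X : Type*} [MeasurableSpace X] {μ : Measure X} {A : ℕ → ℕ → ℕ}

/-- `P` is the multiplication operator by the indicator of `s`. -/
def IsMul (P : Lp ℂ 2 μ →L[ℂ] Lp ℂ 2 μ) (s : Set X) : Prop :=
  ∀ φ : Lp ℂ 2 μ, (P φ : X → ℂ) =ᵐ[μ] s.indicator (φ : X → ℂ)

lemma isMul_one : IsMul (1 : Lp ℂ 2 μ →L[ℂ] Lp ℂ 2 μ) Set.univ := by
  intro φ
  rw [ContinuousLinearMap.one_apply, Set.indicator_univ]

lemma isMul_zero : IsMul (0 : Lp ℂ 2 μ →L[ℂ] Lp ℂ 2 μ) (∅ : Set X) := by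
  intro φ
  rw [ContinuousLinearMap.zero_apply, Set.indicator_empty]
  exact Lp.coeFn_zero ℂ 2 μ

lemma isMul_mul {P Q : Lp ℂ 2 μ →L[ℂ] Lp ℂ 2 μ} {s t : Set X}
    (hP : IsMul P s) (hQ : IsMul Q t) : IsMul (P * Q) (s ∩ t) := by
  intro φ
  rw [ContinuousLinearMap.mul_apply, ← Set.indicator_indicator]
  refine (hP (Q φ)).trans ?_
  filter_upwards [hQ φ] with x hx
  by_cases hxs : x ∈ s
  · rw [Set.indicator_of_mem hxs, Set.indicator_of_mem hxs, hx]
  · rw [Set.indicator_of_notMem hxs, Set.indicator_of_notMem hxs]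

lemma isMul_one_sub {P : Lp ℂ 2 μ →L[ℂ] Lp ℂ 2 μ} {s : Set X}
    (hP : IsMul P s) : IsMul (1 - P) sᶜ := by
  intro φ
  rw [ContinuousLinearMap.sub_apply, ContinuousLinearMap.one_apply]
  refine (Lp.coeFn_sub φ (P φ)).trans ?_
  filter_upwards [hP φ] with x hx
  simp only [Pi.sub_apply, hx]
  by_cases hxs : x ∈ s
  · rw [Set.indicator_of_mem hxs, Set.indicator_of_notMem (by simpa using hxs)]
    simp
  · rw [Set.indicator_of_notMem hxs, Set.indicator_of_mem (by simpa using hxs)]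
    simp

lemma isMul_add {P Q : Lp ℂ 2 μ →L[ℂ] Lp ℂ 2 μ} {s t : Set X}
    (hP : IsMul P s) (hQ : IsMul Q t) (hst : μ (s ∩ t) = 0) : IsMul (P + Q) (s ∪ t) := by
  intro φ
  rw [ContinuousLinearMap.add_apply]
  refine (Lp.coeFn_add (P φ) (Q φ)).trans ?_
  have hae : ∀ᵐ x ∂μ, x ∉ s ∩ t := measure_eq_zero_iff_ae_notMem.mp hst
  filter_upwards [hP φ, hQ φ, hae] with x hx1 hx2 hx3
  simp only [Pi.add_apply, hx1, hx2]
  by_cases hxs : x ∈ s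
  · have hxt : x ∉ t := fun c => hx3 ⟨hxs, c⟩
    rw [Set.indicator_of_mem hxs, Set.indicator_of_notMem hxt,
      Set.indicator_of_mem (Set.mem_union_left _ hxs), add_zero]
  · by_cases hxt : x ∈ t
    · rw [Set.indicator_of_notMem hxs, Set.indicator_of_mem hxt,
        Set.indicator_of_mem (Set.mem_union_right _ hxt), zero_add]
    · rw [Set.indicator_of_notMem hxs, Set.indicator_of_notMem hxt,
        Set.indicator_of_notMem (fun c => c.elim hxs hxt), add_zero]

lemma isMul_ext {P Q : Lp ℂ 2 μ →L[ℂ] Lp ℂ 2 μ} {s t : Set X}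
    (hP : IsMul P s) (hQ : IsMul Q t) (hst : ∀ᵐ x ∂μ, x ∈ s ↔ x ∈ t) : P = Q := by
  exact ContinuousLinearMap.ext fun φ => Lp.ext ((hP φ).trans
    (Filter.EventuallyEq.trans (indicator_congr_ae_set hst _) (hQ φ).symm))

lemma isMul_list_prod (g : ℕ → (Lp ℂ 2 μ →L[ℂ] Lp ℂ 2 μ)) (S : ℕ → Set X)
    (h : ∀ a, IsMul (g a) (S a)) :
    ∀ L : List ℕ, IsMul (L.map g).prod (⋂ a ∈ L, S a)
  | [] => by
      simp only [List.map_nil, List.prod_nil, List.not_mem_nil, Set.iInter_of_empty,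
        Set.iInter_univ]
      exact isMul_one
  | (b :: l) => by
      have hrec := isMul_list_prod g S h l
      have := isMul_mul (h b) hrec
      have hset : S b ∩ ⋂ a ∈ l, S a = ⋂ a ∈ (b :: l), S a := by
        ext x
        simp only [Set.mem_inter_iff, Set.mem_iInter, List.mem_cons]
        constructor
        · rintro ⟨h1, h2⟩ a (rfl | ha)
          · exact h1
          · exact h2 a ha
        · intro hx
          exact ⟨hx b (Or.inl rfl), fun a ha => hx a (Or.inr ha)⟩
      rw [List.map_cons, List.prod_cons]
      rw [← hset]
      exact this

lemma isMul_finset_sum (t : Finset ℕ) (Qop : ℕ → (Lp ℂ 2 μ →L[ℂ] Lp ℂ 2 μ)) (S : ℕ → Set X)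
    (h : ∀ j, IsMul (Qop j) (S j)) (hdisj : ∀ i j, i ≠ j → μ (S i ∩ S j) = 0) :
    IsMul (∑ j ∈ t, Qop j) (⋃ j ∈ t, S j) := by
  classical
  induction t using Finset.induction with
  | empty => simpa using isMul_zero
  | insert j t hj ih =>
    rw [Finset.sum_insert hj, Finset.set_biUnion_insert]
    refine isMul_add (h j) ih ?_
    rw [Set.inter_iUnion₂]
    refine measure_iUnion_null fun k => measure_iUnion_null fun hk => ?_
    exact hdisj j k (fun e => hj (e ▸ hk))

variable [SigmaFinite μ]

lemma isMul_adj_mul (B : BranchingSystem μ A) (i : ℕ)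
    (T : Lp ℂ 2 μ →L[ℂ] Lp ℂ 2 μ)
    (hT : ∀ φ : Lp ℂ 2 μ, (T φ : X → ℂ) =ᵐ[μ] (B.R i).indicator
      fun x => (Real.sqrt ((B.Φinv i x).toReal) : ℂ) * φ (B.F x)) :
    IsMul (ContinuousLinearMap.adjoint T * T) (B.D i) := by
  intro φ
  have hmem : MemLp ((B.D i).indicator (φ : X → ℂ)) 2 μ :=
    (Lp.memLp φ).indicator (B.measD i)
  have key : (ContinuousLinearMap.adjoint T * T) φ = MemLp.toLp _ hmem := by
    apply ext_inner_right ℂ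
    intro ψ
    rw [ContinuousLinearMap.mul_apply, ContinuousLinearMap.adjoint_inner_left,
      L2.inner_def, L2.inner_def]
    set g : X → ℂ := fun y => (starRingEnd ℂ) ((φ : X → ℂ) y) * (ψ : X → ℂ) y with hg
    have hgm : AEStronglyMeasurable g μ := by
      exact (RCLike.continuous_conj.comp_aestronglyMeasurable
        (Lp.aestronglyMeasurable φ)).mul (Lp.aestronglyMeasurable ψ)
    have hw : Measurable fun a => (B.Φinv i a).toNNReal :=
      ENNReal.measurable_toNNReal.comp (B.measΦinv i)
    have step1 : ∫ a, (inner ℂ ((T φ : X → ℂ) a) ((T ψ : X → ℂ) a) : ℂ) ∂μ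
        = ∫ a, (B.Φinv i a).toNNReal • g (B.F a) ∂μ := by
      refine integral_congr_ae ?_
      filter_upwards [hT φ, hT ψ] with x h1 h2
      rw [h1, h2, RCLike.inner_apply']
      by_cases hx : x ∈ B.R i
      · rw [Set.indicator_of_mem hx, Set.indicator_of_mem hx]
        have hsq : ((Real.sqrt ((B.Φinv i x).toReal) : ℝ) : ℂ)
            * ((Real.sqrt ((B.Φinv i x).toReal) : ℝ) : ℂ)
            = (((B.Φinv i x).toReal : ℝ) : ℂ) := by
          rw [← Complex.ofReal_mul, Real.mul_self_sqrt ENNReal.toReal_nonneg]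
        rw [map_mul, Complex.conj_ofReal, NNReal.smul_def, Complex.real_smul]
        have hco : (((B.Φinv i x).toNNReal : ℝ) : ℂ) = (((B.Φinv i x).toReal : ℝ) : ℂ) := rfl
        rw [hco, hg, ← hsq]
        ring
      · rw [Set.indicator_of_notMem hx, Set.indicator_of_notMem hx]
        have h0 : B.Φinv i x = 0 := B.Φinv_zero i x hx
        simp [h0]
    have step2 : ∫ a, (B.Φinv i a).toNNReal • g (B.F a) ∂μ
        = ∫ a, g (B.F a) ∂(μ.withDensity (B.Φinv i)) := by
      rw [← integral_withDensity_eq_integral_smul hw (fun a => g (B.F a))]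
      congr 1
      refine withDensity_congr_ae ?_
      filter_upwards [B.ae_finite_Φinv i] with x hx
      exact ENNReal.coe_toNNReal hx
    have step3 : ∫ a, g (B.F a) ∂(μ.withDensity (B.Φinv i))
        = ∫ y, g y ∂(μ.restrict (B.D i)) := by
      conv_rhs => rw [← B.mapF i]
      exact (integral_map B.measF.aemeasurable (by rw [B.mapF i]; exact hgm.restrict)).symm
    have hRHS : ∫ a, (inner ℂ ((MemLp.toLp _ hmem : X → ℂ) a) ((ψ : X → ℂ) a) : ℂ) ∂μ
        = ∫ y, g y ∂(μ.restrict (B.D i)) := by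
      rw [← integral_indicator (B.measD i)]
      refine integral_congr_ae ?_
      filter_upwards [MemLp.coeFn_toLp hmem] with x hx
      rw [hx, RCLike.inner_apply']
      by_cases hxD : x ∈ B.D i
      · rw [Set.indicator_of_mem hxD, Set.indicator_of_mem hxD]
      · rw [Set.indicator_of_notMem hxD, Set.indicator_of_notMem hxD]
        simp
    rw [step1, step2, step3, hRHS]
  rw [key]
  exact MemLp.coeFn_toLp hmem

lemma T_congr (B : BranchingSystem μ A) (i : ℕ)
    (T : Lp ℂ 2 μ →L[ℂ] Lp ℂ 2 μ)
    (hT : ∀ φ : Lp ℂ 2 μ, (T φ : X → ℂ) =ᵐ[μ] (B.R i).indicator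
      fun x => (Real.sqrt ((B.Φinv i x).toReal) : ℂ) * φ (B.F x))
    {ξ : Lp ℂ 2 μ} {g : X → ℂ} (hg : (ξ : X → ℂ) =ᵐ[μ] g) :
    (T ξ : X → ℂ) =ᵐ[μ] (B.R i).indicator
      fun x => (Real.sqrt ((B.Φinv i x).toReal) : ℂ) * g (B.F x) := by
  refine (hT ξ).trans ?_
  filter_upwards [B.comp_F_ae hg] with x hx
  by_cases hxR : x ∈ B.R i
  · rw [Set.indicator_of_mem hxR, Set.indicator_of_mem hxR]
    rw [show ((ξ : X → ℂ) (B.F x)) = g (B.F x) from hx]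
  · rw [Set.indicator_of_notMem hxR, Set.indicator_of_notMem hxR]

lemma exists_eta (B : BranchingSystem μ A) (i : ℕ)
    (T : Lp ℂ 2 μ →L[ℂ] Lp ℂ 2 μ)
    (hT : ∀ φ : Lp ℂ 2 μ, (T φ : X → ℂ) =ᵐ[μ] (B.R i).indicator
      fun x => (Real.sqrt ((B.Φinv i x).toReal) : ℂ) * φ (B.F x))
    (ξ : Lp ℂ 2 μ) :
    ∃ η : Lp ℂ 2 μ, (T η : X → ℂ) =ᵐ[μ] (B.R i).indicator (ξ : X → ℂ) := by
  classical
  set G : X → ℂ := (Lp.aestronglyMeasurable ξ).mk _ with hGdef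
  have hGsm : StronglyMeasurable G := (Lp.aestronglyMeasurable ξ).stronglyMeasurable_mk
  have hGae : (ξ : X → ℂ) =ᵐ[μ] G := (Lp.aestronglyMeasurable ξ).ae_eq_mk
  set e : X → ℂ := (B.D i).indicator
      (fun x => (Real.sqrt ((B.Φ i x).toReal) : ℂ) * G (B.f i x)) with he
  have hesm : StronglyMeasurable e := by
    refine StronglyMeasurable.indicator (StronglyMeasurable.mul ?_ ?_) (B.measD i)
    · refine Measurable.stronglyMeasurable ?_
      exact Complex.measurable_ofReal.comp
        (Real.continuous_sqrt.measurable.comp (B.measΦ i).ennreal_toReal)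
    · exact hGsm.comp_measurable (B.measf i)
  -- square-integrability
  set h : X → ℝ≥0∞ := fun y => ((‖G y‖₊ : ℝ≥0∞)) ^ (2 : ℕ) with hh
  have hhm : Measurable h := (hGsm.measurable.nnnorm.coe_nnreal_ennreal).pow_const _
  have hξ2 : ∫⁻ x, h x ∂μ < ∞ := by
    have h2 := (Lp.memLp ξ).2
    rw [eLpNorm_eq_lintegral_rpow_enorm_toReal (by norm_num) (by norm_num)] at h2
    have h3 : (2 : ℝ≥0∞).toReal = ((2 : ℕ) : ℝ) := by norm_num
    rw [h3] at h2
    have h4 : ∫⁻ x, (‖(ξ : X → ℂ) x‖₊ : ℝ≥0∞) ^ ((2:ℕ) : ℝ) ∂μ < ∞ := by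
      refine (ENNReal.rpow_lt_top_iff_of_pos (x := ∫⁻ x, (‖(ξ : X → ℂ) x‖₊ : ℝ≥0∞) ^ ((2:ℕ):ℝ) ∂μ) (y := 1/((2:ℕ):ℝ)) (by norm_num)).mp ?_
      exact h2
    have h5 : ∫⁻ x, h x ∂μ = ∫⁻ x, (‖(ξ : X → ℂ) x‖₊ : ℝ≥0∞) ^ ((2:ℕ) : ℝ) ∂μ := by
      refine lintegral_congr_ae ?_
      filter_upwards [hGae] with x hx
      rw [hh]
      simp only [← hx, ENNReal.rpow_natCast]
    rw [h5]; exact h4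
  have hmemE : MemLp e 2 μ := by
    refine ⟨hesm.aestronglyMeasurable, ?_⟩
    rw [eLpNorm_eq_lintegral_rpow_enorm_toReal (by norm_num) (by norm_num)]
    refine ENNReal.rpow_lt_top_of_nonneg (by norm_num) ?_
    refine ne_of_lt ?_
    have hcalc : ∫⁻ x, (‖e x‖₊ : ℝ≥0∞) ^ (2 : ℝ≥0∞).toReal ∂μ
        = ∫⁻ x, (B.D i).indicator
          (fun x => ENNReal.ofReal ((B.Φ i x).toReal) * h (B.f i x)) x ∂μ := by
      refine lintegral_congr fun x => ?_
      have h3 : (2 : ℝ≥0∞).toReal = ((2 : ℕ) : ℝ) := by norm_num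
      rw [h3, ENNReal.rpow_natCast]
      by_cases hx : x ∈ B.D i
      · rw [he]
        rw [Set.indicator_of_mem hx, Set.indicator_of_mem hx, nnnorm_mul]
        push_cast
        rw [mul_pow]
        congr 1
        have : ‖((Real.sqrt ((B.Φ i x).toReal) : ℝ) : ℂ)‖₊ = ‖Real.sqrt ((B.Φ i x).toReal)‖₊ := by
          rw [Complex.nnnorm_real]
        rw [this]
        have h6 : ((‖Real.sqrt ((B.Φ i x).toReal)‖₊ : ℝ≥0∞)) = ENNReal.ofReal (Real.sqrt ((B.Φ i x).toReal)) := (Real.enorm_eq_ofReal (Real.sqrt_nonneg _))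
        rw [h6, pow_two, ← ENNReal.ofReal_mul (Real.sqrt_nonneg _),
          Real.mul_self_sqrt ENNReal.toReal_nonneg]
      · rw [he, Set.indicator_of_notMem hx, Set.indicator_of_notMem hx]
        simp
    change ∫⁻ x, (‖e x‖₊ : ℝ≥0∞) ^ (2 : ℝ≥0∞).toReal ∂μ < ∞
    rw [hcalc, lintegral_indicator (B.measD i)]
    calc ∫⁻ x in B.D i, ENNReal.ofReal ((B.Φ i x).toReal) * h (B.f i x) ∂μ
        ≤ ∫⁻ x in B.D i, B.Φ i x * h (B.f i x) ∂μ := by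
          refine lintegral_mono fun x => ?_
          exact mul_le_mul_left ENNReal.ofReal_toReal_le _
      _ = ∫⁻ x, B.Φ i x * h (B.f i x) ∂μ := by
          have hz := setLIntegral_eq_inter (μ := μ) (B.measD i)
            (g := fun x => B.Φ i x * h (B.f i x))
            (fun x hx => by show B.Φ i x * h (B.f i x) = 0; rw [B.Φ_zero i x hx, zero_mul])
            Set.univ
          rw [Set.univ_inter, Measure.restrict_univ] at hz
          exact hz.symm
      _ = ∫⁻ y, h (B.f i y) ∂(Measure.map B.F (μ.restrict (B.R i))) := by
          rw [B.mapFR i, lintegral_withDensity_eq_lintegral_mul μ (B.measΦ i)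
            (show Measurable fun y => h (B.f i y) from hhm.comp (B.measf i))]
          rfl
      _ = ∫⁻ x in B.R i, h (B.f i (B.F x)) ∂μ :=
          lintegral_map (hhm.comp (B.measf i)) B.measF
      _ = ∫⁻ x in B.R i, h x ∂μ := by
          refine lintegral_congr_ae ?_
          filter_upwards [B.aeR i] with x hx
          rw [hx.2]
      _ ≤ ∫⁻ x, h x ∂μ := setLIntegral_le_lintegral _ _
      _ < ∞ := hξ2
  refine ⟨MemLp.toLp e hmemE, ?_⟩
  refine (T_congr B i T hT (MemLp.coeFn_toLp hmemE)).trans ?_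
  refine indicator_congr_restrict (B.measR i) ?_
  filter_upwards [B.aeR i, B.lemE i, ae_restrict_of_ae hGae] with x hgood hprod hxG
  obtain ⟨hFD, hfF⟩ := hgood
  show (Real.sqrt ((B.Φinv i x).toReal) : ℂ) * e (B.F x) = (ξ : X → ℂ) x
  rw [he, Set.indicator_of_mem hFD, hfF, ← hxG]
  have hab : Real.sqrt ((B.Φinv i x).toReal) * Real.sqrt ((B.Φ i (B.F x)).toReal) = 1 := by
    rw [← Real.sqrt_mul ENNReal.toReal_nonneg, ← ENNReal.toReal_mul, hprod]
    simp
  rw [← mul_assoc, ← Complex.ofReal_mul, hab]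
  simp

lemma isMul_mul_adj (B : BranchingSystem μ A) (i : ℕ)
    (T : Lp ℂ 2 μ →L[ℂ] Lp ℂ 2 μ)
    (hT : ∀ φ : Lp ℂ 2 μ, (T φ : X → ℂ) =ᵐ[μ] (B.R i).indicator
      fun x => (Real.sqrt ((B.Φinv i x).toReal) : ℂ) * φ (B.F x)) :
    IsMul (T * ContinuousLinearMap.adjoint T) (B.R i) := by
  have hP : IsMul (ContinuousLinearMap.adjoint T * T) (B.D i) := isMul_adj_mul B i T hT
  -- T ∘ (T* T) = T
  have hTP : ∀ η : Lp ℂ 2 μ, T ((ContinuousLinearMap.adjoint T * T) η) = T η := by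
    intro η
    have hmem : MemLp ((B.D i).indicator (η : X → ℂ)) 2 μ :=
      (Lp.memLp η).indicator (B.measD i)
    have h1 : (ContinuousLinearMap.adjoint T * T) η = MemLp.toLp _ hmem :=
      Lp.ext ((hP η).trans (MemLp.coeFn_toLp hmem).symm)
    rw [h1]
    apply Lp.ext
    refine (T_congr B i T hT (MemLp.coeFn_toLp hmem)).trans
      (Filter.EventuallyEq.trans ?_ (hT η).symm)
    refine indicator_congr_restrict (B.measR i) ?_
    filter_upwards [B.aeR i] with x hx
    obtain ⟨hFD, _⟩ := hx
    show (Real.sqrt ((B.Φinv i x).toReal) : ℂ) * (B.D i).indicator (η : X → ℂ) (B.F x)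
        = (Real.sqrt ((B.Φinv i x).toReal) : ℂ) * (η : X → ℂ) (B.F x)
    rw [Set.indicator_of_mem hFD]
  -- Q fixes everything of the form M_R ξ
  have step1 : ∀ ξ : Lp ℂ 2 μ,
      (T * ContinuousLinearMap.adjoint T)
        (MemLp.toLp ((B.R i).indicator (ξ : X → ℂ)) ((Lp.memLp ξ).indicator (B.measR i)))
      = MemLp.toLp ((B.R i).indicator (ξ : X → ℂ)) ((Lp.memLp ξ).indicator (B.measR i)) := by
    intro ξ
    obtain ⟨η, hη⟩ := exists_eta B i T hT ξ
    have hTη : T η = MemLp.toLp ((B.R i).indicator (ξ : X → ℂ)) ((Lp.memLp ξ).indicator (B.measR i)) :=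
      Lp.ext (hη.trans (MemLp.coeFn_toLp _).symm)
    rw [← hTη, ContinuousLinearMap.mul_apply]
    exact hTP η
  intro φ
  set m := MemLp.toLp ((B.R i).indicator (φ : X → ℂ)) ((Lp.memLp φ).indicator (B.measR i)) with hm
  have hTab : ∀ a b : Lp ℂ 2 μ, (inner ℂ (T a) b : ℂ) = inner ℂ a ((ContinuousLinearMap.adjoint T) b) := by
    intro a b
    conv_lhs => rw [← ContinuousLinearMap.adjoint_adjoint T]
    exact ContinuousLinearMap.adjoint_inner_left _ _ _
  have hsa : ∀ a b : Lp ℂ 2 μ,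
      (inner ℂ ((T * ContinuousLinearMap.adjoint T) a) b : ℂ)
      = inner ℂ a ((T * ContinuousLinearMap.adjoint T) b) := by
    intro a b
    rw [ContinuousLinearMap.mul_apply, ContinuousLinearMap.mul_apply, hTab,
      ContinuousLinearMap.adjoint_inner_left]
  have step2 : (T * ContinuousLinearMap.adjoint T) φ = (T * ContinuousLinearMap.adjoint T) m := by
    apply ext_inner_right ℂ
    intro ψ
    rw [hsa φ ψ, hsa m ψ]
    rw [L2.inner_def, L2.inner_def]
    refine integral_congr_ae ?_
    have hQψ : ((T * ContinuousLinearMap.adjoint T) ψ : X → ℂ)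
        =ᵐ[μ] (B.R i).indicator fun x => (Real.sqrt ((B.Φinv i x).toReal) : ℂ)
          * ((ContinuousLinearMap.adjoint T ψ : Lp ℂ 2 μ) : X → ℂ) (B.F x) := by
      rw [ContinuousLinearMap.mul_apply]
      exact hT _
    filter_upwards [hQψ, MemLp.coeFn_toLp (f := (B.R i).indicator (φ : X → ℂ)) ((Lp.memLp φ).indicator (B.measR i))] with x hx hmx
    rw [RCLike.inner_apply', RCLike.inner_apply', hx, hm, hmx]
    by_cases hxR : x ∈ B.R i
    · rw [Set.indicator_of_mem hxR, Set.indicator_of_mem hxR]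
    · rw [Set.indicator_of_notMem hxR, Set.indicator_of_notMem hxR]
      simp
  rw [step2, hm, step1 φ]
  exact MemLp.coeFn_toLp _

end Op


/-- the operators π(S_i)φ = χ_{R_i}·Φ_{f_i⁻¹}^{1/2}·(φ∘F) from an
A_∞-branching system satisfy the fourth Cuntz–Krieger relation: for finite subsets
U, V ⊆ ℕ (given as duplicate-free lists) with A(U,V,j) = 1 for only finitely many j,
∏_{u∈U} π(S_u)*π(S_u) · ∏_{v∈V} (1 − π(S_v)*π(S_v)) = Σ_{j : A(U,V,j)=1} π(S_j)π(S_j)*. -/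
theorem stmt19 {X : Type*} [MeasurableSpace X] (μ : Measure X) [SigmaFinite μ]
    (A : ℕ → ℕ → ℕ) (hA01 : ∀ i j, A i j = 0 ∨ A i j = 1)
    (B : BranchingSystem μ A)
    (T : ℕ → (Lp ℂ 2 μ →L[ℂ] Lp ℂ 2 μ))
    (hT : ∀ i, ∀ φ : Lp ℂ 2 μ,
      (T i φ : X → ℂ) =ᵐ[μ] (B.R i).indicator
        fun x => (Real.sqrt ((B.Φinv i x).toReal) : ℂ) * φ (B.F x))
    (U V : List ℕ) (hU : U.Nodup) (hV : V.Nodup)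
    (hfin : ({j | (∀ u ∈ U, A u j = 1) ∧ ∀ v ∈ V, A v j = 0} : Set ℕ).Finite) :
    (U.map fun u => ContinuousLinearMap.adjoint (T u) * T u).prod *
      (V.map fun v => 1 - ContinuousLinearMap.adjoint (T v) * T v).prod
    = ∑ j ∈ hfin.toFinset, T j * ContinuousLinearMap.adjoint (T j) := by
  classical
  have hPu : ∀ u, IsMul (ContinuousLinearMap.adjoint (T u) * T u) (B.D u) :=
    fun u => isMul_adj_mul B u (T u) (hT u)
  have hQj : ∀ j, IsMul (T j * ContinuousLinearMap.adjoint (T j)) (B.R j) :=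
    fun j => isMul_mul_adj B j (T j) (hT j)
  have hL1 := isMul_list_prod _ _ hPu U
  have hL2 := isMul_list_prod (fun v => 1 - ContinuousLinearMap.adjoint (T v) * T v)
    (fun v => (B.D v)ᶜ) (fun v => isMul_one_sub (hPu v)) V
  have hLHS := isMul_mul hL1 hL2
  have hRHS := isMul_finset_sum hfin.toFinset _ _ hQj B.disjoint
  refine isMul_ext hLHS hRHS ?_
  have hfin' : ({j | (∀ u ∈ U.toFinset, A u j = 1) ∧ ∀ v ∈ V.toFinset, A v j = 0} : Set ℕ).Finite := by
    refine hfin.subset fun j hj => ?_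
    simpa only [Set.mem_setOf_eq, List.mem_toFinset] using hj
  obtain ⟨h5a, h5b⟩ := B.cond5 U.toFinset V.toFinset hfin'
  have hSU : ((⋂ u ∈ U.toFinset, B.D u) ∩ ⋂ v ∈ V.toFinset, (B.D v)ᶜ)
      = ((⋂ a ∈ U, B.D a) ∩ ⋂ a ∈ V, (B.D a)ᶜ) := by
    congr 1
    · ext x; simp [List.mem_toFinset]
    · ext x; simp [List.mem_toFinset]
  have hSJ : (⋃ j ∈ {j | (∀ u ∈ U.toFinset, A u j = 1) ∧ ∀ v ∈ V.toFinset, A v j = 0}, B.R j)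
      = ⋃ j ∈ hfin.toFinset, B.R j := by
    ext x
    simp only [Set.mem_iUnion, Set.Finite.mem_toFinset, Set.mem_setOf_eq, List.mem_toFinset]
  rw [hSU, hSJ] at h5a h5b
  exact Filter.eventuallyEq_set.mp (MeasureTheory.ae_eq_set.mpr ⟨h5a, h5b⟩)
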